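/- Let G be a connected simple graph on the vertex set [n] = {1,…,n}. Then the connected subgraph arrangement A_G over ℚ is projectively unique: every central arrangement in ℚ^n whose intersection lattice is isomorphic as a poset to that of A_G is linearly isomorphic to A_G. -/

import Mathlib

open Submodule

/-! ## Basic definitions for hyperplane arrangements -/

/-- The linear form `∑_{i ∈ I} x_i` on `K^n`. -/
noncomputable def sumForm (n : ℕ) (K : Type*) [Field K] (I : Finset (Fin n)) :
    (Fin n → K) →ₗ[K] K :=
  ∑ i ∈ I, LinearMap.proj i

/-- The hyperplane `H_I = ker (∑_{i ∈ I} x_i)` in `K^n`. -/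
noncomputable def hypI (n : ℕ) (K : Type*) [Field K] (I : Finset (Fin n)) :
    Submodule K (Fin n → K) :=
  LinearMap.ker (sumForm n K I)

/-- The nonempty vertex subsets of `G` inducing connected subgraphs. -/
def connSets {n : ℕ} (G : SimpleGraph (Fin n)) : Set (Finset (Fin n)) :=
  {I | I.Nonempty ∧ (G.induce (I : Set (Fin n))).Connected}

/-- The connected subgraph arrangement `A_G(K)` in `K^n`. -/
noncomputable def connArr (K : Type*) [Field K] {n : ℕ} (G : SimpleGraph (Fin n)) :
    Set (Submodule K (Fin n → K)) :=
  (hypI n K) '' (connSets G)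

/-- The intersection lattice of a central arrangement: all intersections of
subfamilies of `A` (with the empty intersection being the ambient space `⊤`). -/
def lat {K V : Type*} [Field K] [AddCommGroup V] [Module K V]
    (A : Set (Submodule K V)) : Set (Submodule K V) :=
  {X | ∃ B ⊆ A, X = sInf B}

/-- A central arrangement: a finite set of hyperplanes (coatoms of the submodule
lattice) in `V`. -/
def IsCentralArr {K V : Type*} [Field K] [AddCommGroup V] [Module K V]
    (A : Set (Submodule K V)) : Prop :=
  A.Finite ∧ ∀ H ∈ A, IsCoatom H

/-- Two arrangements in `V` are linearly isomorphic. -/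
def LinIsom {K V : Type*} [Field K] [AddCommGroup V] [Module K V]
    (A B : Set (Submodule K V)) : Prop :=
  ∃ φ : V ≃ₗ[K] V, B = (Submodule.map (φ : V →ₗ[K] V)) '' A

/-- Two arrangements are `L`-equivalent: their intersection lattices are
isomorphic posets. -/
def LEquiv {K V W : Type*} [Field K] [AddCommGroup V] [Module K V]
    [AddCommGroup W] [Module K W]
    (A : Set (Submodule K V)) (B : Set (Submodule K W)) : Prop :=
  Nonempty (↥(lat A) ≃o ↥(lat B))

/-- An arrangement `A` in `V` is projectively unique if every central arrangement
in `V` that is `L`-equivalent to `A` is linearly isomorphic to `A`. -/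
def ProjUnique {K V : Type*} [Field K] [AddCommGroup V] [Module K V]
    (A : Set (Submodule K V)) : Prop :=
  ∀ B : Set (Submodule K V), IsCentralArr B → LEquiv B A → LinIsom B A

/-- `Gen_i(A,S)`. -/
def Gen {K V : Type*} [Field K] [AddCommGroup V] [Module K V]
    (A S : Set (Submodule K V)) : ℕ → Set (Submodule K V)
  | 0 => S
  | (i+1) => {H | H ∈ A ∧ ∃ J ⊆ lat (Gen A S i), H = sSup J}

/-- The subarrangement `⟨S⟩_A` of `A` generated by `S`. -/
def genSpan {K V : Type*} [Field K] [AddCommGroup V] [Module K V]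
    (A S : Set (Submodule K V)) : Set (Submodule K V) :=
  ⋃ i, Gen A S i

/-- An arrangement is irreducible if it is not (linearly isomorphic to)
a nontrivial product of two lower-dimensional arrangements. -/
def IsIrredArr {K V : Type*} [Field K] [AddCommGroup V] [Module K V]
    (A : Set (Submodule K V)) : Prop :=
  ¬ ∃ U W : Submodule K V, IsCompl U W ∧ U ≠ ⊥ ∧ W ≠ ⊥ ∧ ∀ H ∈ A, U ≤ H ∨ W ≤ H

/-! ## Freeness -/

/-- The linear form `f` as a degree one polynomial. -/
noncomputable def toPoly {n : ℕ} {K : Type*} [Field K] (f : (Fin n → K) →ₗ[K] K) :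
    MvPolynomial (Fin n) K :=
  ∑ i, MvPolynomial.C (f (Pi.single i 1)) * MvPolynomial.X i

/-- The module `D(A)` of logarithmic derivations of an arrangement in `K^n`:
all `θ` with `θ(α_H) ∈ (α_H)` for every defining form `α_H` of every `H ∈ A`. -/
noncomputable def logDer (K : Type*) [Field K] {n : ℕ}
    (A : Set (Submodule K (Fin n → K))) :
    Submodule (MvPolynomial (Fin n) K)
      (Derivation K (MvPolynomial (Fin n) K) (MvPolynomial (Fin n) K)) where
  carrier := {θ | ∀ H ∈ A, ∀ f : (Fin n → K) →ₗ[K] K, LinearMap.ker f = H →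
      θ (toPoly f) ∈ Ideal.span {toPoly f}}
  add_mem' := by
    intro a b ha hb H hH f hf
    simpa using add_mem (ha H hH f hf) (hb H hH f hf)
  zero_mem' := by
    intro H hH f hf
    simp
  smul_mem' := by
    intro c θ hθ H hH f hf
    simpa [smul_eq_mul] using Ideal.mul_mem_left _ c (hθ H hH f hf)

/-- An arrangement in `K^n` is free if its module of logarithmic derivations is
free over the polynomial ring. -/
def IsFreeArr (K : Type*) [Field K] {n : ℕ}
    (A : Set (Submodule K (Fin n → K))) : Prop :=
  Module.Free (MvPolynomial (Fin n) K) ↥(logDer K A)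

/-- Freeness with a prescribed tuple of exponents: there is a basis of `D(A)`
consisting of homogeneous derivations of the given degrees. -/
def IsFreeExp (K : Type*) [Field K] {n : ℕ} (A : Set (Submodule K (Fin n → K)))
    (e : Fin n → ℕ) : Prop :=
  ∃ b : Module.Basis (Fin n) (MvPolynomial (Fin n) K) ↥(logDer K A),
    ∀ i j, ((b i : Derivation K (MvPolynomial (Fin n) K) (MvPolynomial (Fin n) K))
      (MvPolynomial.X j)).IsHomogeneous (e i)

/-- The restriction `A^X` of an arrangement to a flat `X`, as an arrangement in `X`. -/
def restrictArr {K V : Type*} [Field K] [AddCommGroup V] [Module K V]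
    (A : Set (Submodule K V)) (X : Submodule K V) : Set (Submodule K ↥X) :=
  {Y | ∃ H ∈ A, ¬ X ≤ H ∧ Y = Submodule.comap X.subtype H}

/-- Freeness with prescribed exponents for an arrangement in an abstract space:
transport along a linear isomorphism with `K^d`. -/
def IsFreeExpOn {K W : Type*} [Field K] [AddCommGroup W] [Module K W]
    (A : Set (Submodule K W)) (d : ℕ) (e : Fin d → ℕ) : Prop :=
  ∃ φ : W ≃ₗ[K] (Fin d → K),
    IsFreeExp K ((Submodule.map (φ : W →ₗ[K] (Fin d → K))) '' A) e

/-- Accuracy: `A` is free with (sorted) exponents `e₁ ≤ … ≤ e_n` and for each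
`1 ≤ d ≤ n` some flat `X ∈ L(A)` of dimension `d` has free restriction `A^X`
with exponents `(e₁, …, e_d)`. -/
def IsAccurate (K : Type*) [Field K] {n : ℕ}
    (A : Set (Submodule K (Fin n → K))) : Prop :=
  ∃ e : Fin n → ℕ, Monotone e ∧ IsFreeExp K A e ∧
    ∀ d : ℕ, 1 ≤ d → ∀ (hdn : d ≤ n), ∃ X ∈ lat A, Module.finrank K ↥X = d ∧
      IsFreeExpOn (restrictArr A X) d (fun i => e ⟨i.1, lt_of_lt_of_le i.2 hdn⟩)

/-! ## Graphs -/

/-- The path graph on vertices `0, 1, …, n-1` (consecutive vertices adjacent). -/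
def pathGraph' (n : ℕ) : SimpleGraph (Fin n) :=
  SimpleGraph.fromRel (fun a b => a.1 + 1 = b.1)

/-- The almost-path graph `A_{n,k}` (vertices `1, …, n+1` of the paper are
`0, …, n` here): a path on `0, …, n-1` plus the vertex `n` joined to `k-1`. -/
def almostPathGraph (n k : ℕ) : SimpleGraph (Fin (n+1)) :=
  SimpleGraph.fromRel (fun a b => (a.1 + 1 = b.1 ∧ b.1 < n) ∨ (a.1 + 1 = k ∧ b.1 = n))

/-- The path-with-triangle graph `Δ_{n,k}` (vertices `1, …, n+1` of the paper are
`0, …, n` here): a path on `0, …, n-1` plus the vertex `n` joined to `k-1` and `k`. -/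
def pathTriangleGraph (n k : ℕ) : SimpleGraph (Fin (n+1)) :=
  SimpleGraph.fromRel (fun a b =>
    (a.1 + 1 = b.1 ∧ b.1 < n) ∨ ((a.1 + 1 = k ∨ a.1 = k) ∧ b.1 = n))

/-! ## Factored and inductively factored arrangements -/

/-- The localization `A_X`. -/
def locArr {K V : Type*} [Field K] [AddCommGroup V] [Module K V]
    (A : Set (Submodule K V)) (X : Submodule K V) : Set (Submodule K V) :=
  {H | H ∈ A ∧ X ≤ H}

/-- `P` is a partition of the set `A` (into nonempty blocks). -/
def IsPartitionOf {α : Type*} (A : Set α) (P : Set (Set α)) : Prop :=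
  (∀ B ∈ P, B.Nonempty) ∧ (∀ B ∈ P, B ⊆ A) ∧ ∀ a ∈ A, ∃! B, B ∈ P ∧ a ∈ B

/-- A partition of an arrangement is independent if any transversal choice of
hyperplanes, one from each block, is linearly independent (the codimension of the
intersection equals the number of blocks). -/
def IsIndepPartition {K V : Type*} [Field K] [AddCommGroup V] [Module K V]
    (P : Set (Set (Submodule K V))) : Prop :=
  ∀ f : Set (Submodule K V) → Submodule K V, (∀ B ∈ P, f B ∈ B) →
    Module.finrank K V = P.ncard + Module.finrank K ↥(⨅ B ∈ P, f B)

/-- A nice partition (factorization) of an arrangement. -/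
def IsNicePartition {K V : Type*} [Field K] [AddCommGroup V] [Module K V]
    (A : Set (Submodule K V)) (P : Set (Set (Submodule K V))) : Prop :=
  IsPartitionOf A P ∧ IsIndepPartition P ∧
    ∀ X ∈ lat A, X ≠ (⊤ : Submodule K V) →
      ∃ B ∈ P, ∃ H, B ∩ locArr A X = {H}

/-- An arrangement is factored (nice) if it admits a nice partition. -/
def IsFactored {K V : Type*} [Field K] [AddCommGroup V] [Module K V]
    (A : Set (Submodule K V)) : Prop :=
  ∃ P, IsNicePartition A P

/-- Inductively factored arrangements (in coordinate spaces `K^d`, restrictions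
being transported to a coordinate space by a linear isomorphism). -/
inductive IndFactored (K : Type) [Field K] :
    (d : ℕ) → Set (Submodule K (Fin d → K)) → Set (Set (Submodule K (Fin d → K))) → Prop
  | empty (d : ℕ) : IndFactored K d ∅ ∅
  | step (d : ℕ) (A : Set (Submodule K (Fin d → K)))
      (P : Set (Set (Submodule K (Fin d → K))))
      (B₁ : Set (Submodule K (Fin d → K))) (H₀ : Submodule K (Fin d → K))
      (e : ℕ) (φ : ↥H₀ ≃ₗ[K] (Fin e → K))
      (hB₁ : B₁ ∈ P) (hH₀B : H₀ ∈ B₁) (hH₀A : H₀ ∈ A)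
      (hbij : Set.BijOn (fun H => Submodule.comap H₀.subtype H) (A \ B₁)
        ((fun H => Submodule.comap H₀.subtype H) '' (A \ {H₀})))
      (hdel : IndFactored K d (A \ {H₀})
        {C | ∃ B ∈ P, C = B ∩ (A \ {H₀}) ∧ C.Nonempty})
      (hres : IndFactored K e
        ((fun Y => Submodule.map (φ : ↥H₀ →ₗ[K] (Fin e → K)) Y) ''
          ((fun H => Submodule.comap H₀.subtype H) '' (A \ {H₀})))
        {C | ∃ B ∈ P, B ≠ B₁ ∧
          C = (fun Y => Submodule.map (φ : ↥H₀ →ₗ[K] (Fin e → K)) Y) ''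
            ((fun H => Submodule.comap H₀.subtype H) '' B)}) :
      IndFactored K d A P

/-- Inductively free arrangements with their multisets of exponents. -/
inductive IndFree (K : Type) [Field K] :
    (d : ℕ) → Set (Submodule K (Fin d → K)) → Multiset ℕ → Prop
  | empty (d : ℕ) : IndFree K d ∅ (Multiset.replicate d 0)
  | step (d : ℕ) (A : Set (Submodule K (Fin d → K))) (H₀ : Submodule K (Fin d → K))
      (m : ℕ) (φ : ↥H₀ ≃ₗ[K] (Fin m → K)) (E : Multiset ℕ) (e : ℕ)
      (hH₀ : H₀ ∈ A)
      (hdel : IndFree K d (A \ {H₀}) (e ::ₘ E))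
      (hres : IndFree K m
        ((fun Y => Submodule.map (φ : ↥H₀ →ₗ[K] (Fin m → K)) Y) ''
          ((fun H => Submodule.comap H₀.subtype H) '' (A \ {H₀}))) E) :
      IndFree K d A ((e+1) ::ₘ E)

/-! ## Asphericity -/

/-- The complement of (the union of) a complex arrangement in `ℂ^n`. -/
def arrComp {n : ℕ} (A : Set (Submodule ℂ (Fin n → ℂ))) : Set (Fin n → ℂ) :=
  {v | ∀ H ∈ A, v ∉ H}

/-- A space is aspherical if all its homotopy groups `π_m`, `m ≥ 2`, vanish. -/
def IsAspherical (X : Type*) [TopologicalSpace X] : Prop :=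
  ∀ (x : X) (m : ℕ), 2 ≤ m → Subsingleton (HomotopyGroup (Fin m) X x)

/-- A complex arrangement is `K(π,1)` if its complement is aspherical. -/
def IsKPi1 {n : ℕ} (A : Set (Submodule ℂ (Fin n → ℂ))) : Prop :=
  IsAspherical ↥(arrComp A)

/-! ## Formality -/

/-- Formality: all linear dependencies among (any choice of) defining forms of the
hyperplanes are generated by the dependencies supported on rank-two flats. -/
def IsFormal {K V : Type*} [Field K] [AddCommGroup V] [Module K V]
    (A : Set (Submodule K V)) : Prop :=
  ∀ α : Submodule K V → (V →ₗ[K] K),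
    (∀ H ∈ A, LinearMap.ker (α H) = H) →
    ∀ c : Submodule K V →₀ K, ↑c.support ⊆ A →
      (∑ H ∈ c.support, c H • α H) = 0 →
      c ∈ Submodule.span K
        {r : Submodule K V →₀ K | ↑r.support ⊆ A ∧
          (∑ H ∈ r.support, r H • α H) = 0 ∧
          ∃ X ∈ lat A, Module.finrank K (V ⧸ X) = 2 ∧ ∀ H ∈ r.support, X ≤ H}

/-- Combinatorial formality. -/
def IsCombFormal {K V : Type*} [Field K] [AddCommGroup V] [Module K V]
    (A : Set (Submodule K V)) : Prop :=
  IsFormal A ∧ ∀ (K' : Type) [Field K'] (m : ℕ) (B : Set (Submodule K' (Fin m → K'))),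
    IsCentralArr B → Nonempty (↥(lat B) ≃o ↥(lat A)) → IsFormal B

/-! ## Line closure -/

/-- `C` is a line-closed subset of the arrangement `A`. -/
def IsLineClosed {K V : Type*} [Field K] [AddCommGroup V] [Module K V]
    (A C : Set (Submodule K V)) : Prop :=
  ∀ H ∈ C, ∀ H' ∈ C, {H'' | H'' ∈ A ∧ H ⊓ H' ≤ H''} ⊆ C

/-- The line closure of `B` in `A`. -/
def lineClosure {K V : Type*} [Field K] [AddCommGroup V] [Module K V]
    (A B : Set (Submodule K V)) : Set (Submodule K V) :=
  ⋂₀ {C | B ⊆ C ∧ C ⊆ A ∧ IsLineClosed A C}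

/-! ## MAT-freeness -/

/-- MAT-freeness of an arrangement in `K^n`. -/
def IsMATFree (K : Type*) [Field K] {n : ℕ}
    (A : Set (Submodule K (Fin n → K))) : Prop :=
  ∃ (m : ℕ) (π : Fin m → Set (Submodule K (Fin n → K))),
    (⋃ i, π i) = A ∧
    (∀ i, (π i).Nonempty) ∧
    (∀ i j, i ≠ j → Disjoint (π i) (π j)) ∧
    ∀ j : Fin m,
      (n = (π j).ncard + Module.finrank K ↥(sInf (π j) : Submodule K (Fin n → K))) ∧
      (¬ (SetLike.coe (sInf (π j) : Submodule K (Fin n → K)) ⊆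
          ⋃ H ∈ {H | ∃ i : Fin m, i < j ∧ H ∈ π i}, SetLike.coe H)) ∧
      ∀ H ∈ π j,
        {H' | ∃ i : Fin m, i < j ∧ H' ∈ π i}.ncard =
          ((fun H' => H' ⊓ H) '' {H' | ∃ i : Fin m, i < j ∧ H' ∈ π i}).ncard + j.1

/-! ## Subarrangements by size, supersolvability -/

/-- The ideal subarrangement `A_G^s` of hyperplanes `H_I` with `|I| ≤ s`. -/
noncomputable def AGs (K : Type*) [Field K] {n : ℕ} (G : SimpleGraph (Fin n)) (s : ℕ) :
    Set (Submodule K (Fin n → K)) :=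
  hypI n K '' {I | I ∈ connSets G ∧ I.card ≤ s}

/-- The closure of a subspace in the intersection lattice of `A`. -/
noncomputable def flatClosure {K V : Type*} [Field K] [AddCommGroup V] [Module K V]
    (A : Set (Submodule K V)) (Z : Submodule K V) : Submodule K V :=
  sInf {H | H ∈ A ∧ Z ≤ H}

/-- The rank (codimension) of a subspace of `K^n`. -/
noncomputable def arrRank (K : Type*) [Field K] {n : ℕ}
    (X : Submodule K (Fin n → K)) : ℕ :=
  n - Module.finrank K ↥X

/-- A modular flat of an arrangement. -/
noncomputable def IsModularFlat (K : Type*) [Field K] {n : ℕ}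
    (A : Set (Submodule K (Fin n → K))) (X : Submodule K (Fin n → K)) : Prop :=
  X ∈ lat A ∧ ∀ Y ∈ lat A,
    arrRank K X + arrRank K Y =
      arrRank K (X ⊓ Y) + arrRank K (flatClosure A (X ⊔ Y))

/-- Supersolvability: a maximal chain of modular flats in `L(A)`. -/
noncomputable def IsSupersolvable (K : Type*) [Field K] {n : ℕ}
    (A : Set (Submodule K (Fin n → K))) : Prop :=
  ∃ c : ℕ → Submodule K (Fin n → K),
    c 0 = ⊤ ∧ c (arrRank K (sInf A)) = sInf A ∧
    (∀ i ≤ arrRank K (sInf A), IsModularFlat K A (c i) ∧ arrRank K (c i) = i) ∧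
    ∀ i < arrRank K (sInf A), c (i + 1) ≤ c i

/-!
Fix an isomorphism `L(A_G) ≅ L(B)`. It sends each `H_I` to a hyperplane `ker g_I` of `B`. Since
`⋂ₖ H_{I_k} ⊆ H_J` holds exactly when a defining form of `H_J` lies in the span of defining forms
of the `H_{I_k}`, the forms `g_I` satisfy the same linear dependencies as the forms
`x_I = ∑_{i ∈ I} x_i`. Hence the `g_{i}` are a basis of the dual space, and `g_I` is supported
exactly on `I`. For a vertex `v ∉ I` adjacent to `I`, the relation `x_{I ∪ v} ∈ ⟨x_I, x_v⟩`
gives `g_{I ∪ v} ∈ ⟨g_I, g_v⟩`, so on `I` the coefficients of `g_I` are proportional to those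
of `g_{I ∪ v}`. As `G` is connected, every connected `I` grows to `[n]` one vertex at a time, so
each `g_I` is a multiple of `∑_{i ∈ I} a_i g_{i}`, where `a` is the coefficient vector of
`g_{[n]}`. The automorphism `x ↦ (a_i g_{i}(x))_i` therefore carries every `ker g_I` onto `H_I`.
-/

section Hyperplanes

variable {K V : Type*} [Field K] [AddCommGroup V] [Module K V]

lemma isCoatom_ker_of_ne_zero {f : Module.Dual K V} (hf : f ≠ 0) :
    IsCoatom (LinearMap.ker f) :=
  LinearMap.isCoatom_ker_of_surjective (LinearMap.surjective_of_ne_zero hf)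

lemma exists_ker_eq_of_isCoatom {H : Submodule K V} (hH : IsCoatom H) :
    ∃ f : Module.Dual K V, LinearMap.ker f = H := by
  obtain ⟨x, -, hx⟩ := SetLike.exists_of_lt hH.1.lt_top
  obtain ⟨f, hfx, hfH⟩ := H.exists_dual_map_eq_bot_of_notMem hx inferInstance
  refine ⟨f, (hH.le_iff.mp (LinearMap.le_ker_iff_map.mpr hfH)).resolve_left fun htop => hfx ?_⟩
  exact LinearMap.mem_ker.mp (htop ▸ Submodule.mem_top)

lemma sInf_ker_le_ker_iff_mem_span [FiniteDimensional K V] {T : Set (Module.Dual K V)}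
    {f : Module.Dual K V} :
    sInf ((fun g : Module.Dual K V => LinearMap.ker g) '' T) ≤ LinearMap.ker f ↔
      f ∈ span K T := by
  constructor
  · intro h
    rw [sInf_image, iInf_subtype'] at h
    simpa using FiniteDimensional.mem_span_of_iInf_ker_le_ker h
  · intro hf x hx
    have hspan : span K T ≤
        (sInf ((fun g : Module.Dual K V => LinearMap.ker g) '' T)).dualAnnihilator :=
      span_le.mpr fun g hg => (mem_dualAnnihilator g).mpr fun w hw =>
        (mem_sInf.mp hw _ ⟨g, hg, rfl⟩ : w ∈ LinearMap.ker g)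
    exact (mem_dualAnnihilator f).mp (hspan hf) x hx

end Hyperplanes

section IntersectionLattice

variable {K V W : Type*} [Field K] [AddCommGroup V] [Module K V] [AddCommGroup W] [Module K W]
  {A : Set (Submodule K V)} {B : Set (Submodule K W)}

lemma top_mem_lat (A : Set (Submodule K V)) : ⊤ ∈ lat A :=
  ⟨∅, Set.empty_subset A, sInf_empty.symm⟩

lemma mem_lat_of_mem {H : Submodule K V} (hH : H ∈ A) : H ∈ lat A :=
  ⟨{H}, Set.singleton_subset_iff.mpr hH, sInf_singleton.symm⟩

lemma sInf_mem_lat {S : Set (Submodule K V)} (hS : S ⊆ lat A) : sInf S ∈ lat A := by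
  refine ⟨{H | H ∈ A ∧ sInf S ≤ H}, fun H hH => hH.1, le_antisymm (le_sInf fun H hH => hH.2) ?_⟩
  refine le_sInf fun X hX => ?_
  obtain ⟨C, hCA, rfl⟩ := hS hX
  exact sInf_le_sInf fun H hH => ⟨hCA hH, (sInf_le hX).trans (sInf_le hH)⟩

open Classical in
noncomputable def latMap (Φ : lat A ≃o lat B) (X : Submodule K V) : Submodule K W :=
  if h : X ∈ lat A then Φ ⟨X, h⟩ else ⊤

variable (Φ : lat A ≃o lat B)

lemma latMap_of_mem {X : Submodule K V} (hX : X ∈ lat A) : latMap Φ X = Φ ⟨X, hX⟩ :=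
  dif_pos hX

lemma latMap_mem_lat (X : Submodule K V) : latMap Φ X ∈ lat B := by
  unfold latMap
  split_ifs
  exacts [(Φ _).2, top_mem_lat B]

lemma latMap_le_latMap_iff {X Y : Submodule K V} (hX : X ∈ lat A) (hY : Y ∈ lat A) :
    latMap Φ X ≤ latMap Φ Y ↔ X ≤ Y := by
  rw [latMap_of_mem Φ hX, latMap_of_mem Φ hY]
  exact Φ.le_iff_le

lemma latMap_symm_latMap {X : Submodule K V} (hX : X ∈ lat A) :
    latMap Φ.symm (latMap Φ X) = X := by
  rw [latMap_of_mem Φ hX, latMap_of_mem Φ.symm (Φ _).2]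
  simp

lemma latMap_latMap_symm {Y : Submodule K W} (hY : Y ∈ lat B) :
    latMap Φ (latMap Φ.symm Y) = Y := by
  simpa using latMap_symm_latMap Φ.symm hY

lemma latMap_sInf {S : Set (Submodule K V)} (hS : S ⊆ lat A) :
    latMap Φ (sInf S) = sInf (latMap Φ '' S) := by
  refine le_antisymm (le_sInf ?_) ?_
  · rintro _ ⟨X, hX, rfl⟩
    exact (latMap_le_latMap_iff Φ (sInf_mem_lat hS) (hS hX)).mpr (sInf_le hX)
  · set T := sInf (latMap Φ '' S)
    have hT : T ∈ lat B := sInf_mem_lat (by rintro _ ⟨X, -, rfl⟩; exact latMap_mem_lat Φ X)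
    have hle : latMap Φ.symm T ≤ sInf S := le_sInf fun X hX => by
      rw [← latMap_symm_latMap Φ (hS hX), latMap_le_latMap_iff Φ.symm hT (latMap_mem_lat Φ X)]
      exact sInf_le ⟨X, hX, rfl⟩
    rw [← latMap_le_latMap_iff Φ.symm hT (latMap_mem_lat Φ _),
      latMap_symm_latMap Φ (sInf_mem_lat hS)]
    exact hle

lemma latMap_top : latMap Φ ⊤ = ⊤ := by
  simpa using latMap_sInf Φ (Set.empty_subset _)

lemma latMap_mem_of_isCoatom (hA : ∀ H ∈ A, IsCoatom H) (hB : ⊤ ∉ B) {H : Submodule K V}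
    (hH : H ∈ A) : latMap Φ H ∈ B := by
  have hHlat := mem_lat_of_mem hH
  obtain ⟨C, hCB, hC⟩ := latMap_mem_lat Φ H
  obtain ⟨H', hH'⟩ : C.Nonempty := by
    refine Set.nonempty_iff_ne_empty.mpr fun hCe => (hA H hH).1 ?_
    rw [← latMap_symm_latMap Φ hHlat, hC, hCe, sInf_empty, latMap_top]
  have hH'lat := mem_lat_of_mem (hCB hH')
  have hle : H ≤ latMap Φ.symm H' := by
    rw [← latMap_symm_latMap Φ hHlat, latMap_le_latMap_iff Φ.symm (latMap_mem_lat Φ H) hH'lat,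
      hC]
    exact sInf_le hH'
  rcases (hA H hH).le_iff.mp hle with htop | heq
  · refine absurd (hCB hH') ?_
    rwa [← latMap_latMap_symm Φ hH'lat, htop, latMap_top]
  · rw [← heq, latMap_latMap_symm Φ hH'lat]
    exact hCB hH'

lemma image_latMap_eq (hA : ∀ H ∈ A, IsCoatom H) (hB : ∀ H ∈ B, IsCoatom H) :
    latMap Φ '' A = B := by
  refine subset_antisymm ?_ fun H' hH' => ⟨latMap Φ.symm H', ?_, ?_⟩
  · rintro _ ⟨H, hH, rfl⟩
    exact latMap_mem_of_isCoatom Φ hA (fun h => (hB ⊤ h).1 rfl) hH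
  · exact latMap_mem_of_isCoatom Φ.symm hB (fun h => (hA ⊤ h).1 rfl) hH'
  · exact latMap_latMap_symm Φ (mem_lat_of_mem hH')

end IntersectionLattice

/-- `f` and `g` represent the same matroid on `S`. -/
def SpanEquivalentOn (K : Type*) {ι M N : Type*} [Field K] [AddCommGroup M] [Module K M]
    [AddCommGroup N] [Module K N] (S : Set ι) (f : ι → M) (g : ι → N) : Prop :=
  ∀ T ⊆ S, ∀ j ∈ S, f j ∈ span K (f '' T) ↔ g j ∈ span K (g '' T)

lemma spanEquivalentOn_of_latMap {K V W ι : Type*} [Field K] [AddCommGroup V] [Module K V]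
    [FiniteDimensional K V] [AddCommGroup W] [Module K W] [FiniteDimensional K W]
    {A : Set (Submodule K V)} {B : Set (Submodule K W)} (Φ : lat A ≃o lat B) {S : Set ι}
    {f : ι → Module.Dual K V} {g : ι → Module.Dual K W} (hf : ∀ i ∈ S, LinearMap.ker (f i) ∈ A)
    (hg : ∀ i ∈ S, LinearMap.ker (g i) = latMap Φ (LinearMap.ker (f i))) :
    SpanEquivalentOn K S f g := by
  intro T hT j hj
  have hlat : (fun h : Module.Dual K V => LinearMap.ker h) '' (f '' T) ⊆ lat A := by
    rintro _ ⟨_, ⟨i, hi, rfl⟩, rfl⟩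
    exact mem_lat_of_mem (hf i (hT hi))
  have himage : latMap Φ '' ((fun h : Module.Dual K V => LinearMap.ker h) '' (f '' T)) =
      (fun h : Module.Dual K W => LinearMap.ker h) '' (g '' T) := by
    simp only [Set.image_image]
    exact Set.image_congr fun i hi => (hg i (hT hi)).symm
  rw [← sInf_ker_le_ker_iff_mem_span, ← sInf_ker_le_ker_iff_mem_span, ← himage, hg j hj,
    ← latMap_sInf Φ hlat, latMap_le_latMap_iff Φ (sInf_mem_lat hlat) (mem_lat_of_mem (hf j hj))]

section SumForm

variable {K : Type*} [Field K] {n : ℕ}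

lemma sumForm_apply (I : Finset (Fin n)) (x : Fin n → K) : sumForm n K I x = ∑ i ∈ I, x i := by
  simp [sumForm]

lemma sumForm_insert {I : Finset (Fin n)} {v : Fin n} (hv : v ∉ I) :
    sumForm n K (insert v I) = sumForm n K I + sumForm n K {v} := by
  simp [sumForm, Finset.sum_insert hv, add_comm]

lemma sumForm_single_one (I : Finset (Fin n)) (j : Fin n) :
    sumForm n K I (Pi.single j 1) = if j ∈ I then 1 else 0 := by
  simp [sumForm_apply, Pi.single_apply]

lemma isCoatom_hypI {I : Finset (Fin n)} (hI : I.Nonempty) : IsCoatom (hypI n K I) := by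
  obtain ⟨j, hj⟩ := hI
  refine isCoatom_ker_of_ne_zero fun h => one_ne_zero (α := K) ?_
  simpa [sumForm_single_one, hj] using LinearMap.congr_fun h (Pi.single j 1)

lemma sumForm_mem_span_singletons_iff {J : Finset (Fin n)} {s : Set (Fin n)} :
    sumForm n K J ∈ span K ((fun i => sumForm n K {i}) '' s) ↔ ↑J ⊆ s := by
  refine ⟨fun h j hj => ?_, fun h => ?_⟩
  · by_contra hjs
    have hspan : span K ((fun i => sumForm n K {i}) '' s) ≤
        LinearMap.ker (Module.Dual.eval K (Fin n → K) (Pi.single j 1)) := by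
      refine span_le.mpr ?_
      rintro _ ⟨i, hi, rfl⟩
      have hji : j ≠ i := fun h => hjs (h ▸ hi)
      simp [sumForm_single_one, hji]
    exact (by simpa [sumForm_single_one] using hspan h : j ∉ J) hj
  · have hsum : sumForm n K J = ∑ i ∈ J, sumForm n K {i} := by simp [sumForm]
    rw [hsum]
    exact sum_mem fun i hi => subset_span ⟨i, h hi, rfl⟩

end SumForm

section ConnectedSets

variable {n : ℕ} {G : SimpleGraph (Fin n)}

lemma singleton_mem_connSets (i : Fin n) : {i} ∈ connSets G := by
  refine ⟨Finset.singleton_nonempty i, ?_⟩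
  rw [Finset.coe_singleton, SimpleGraph.induce_singleton_eq_top]
  exact SimpleGraph.connected_top

lemma univ_mem_connSets (hG : G.Connected) : Finset.univ ∈ connSets G := by
  have := hG.nonempty
  refine ⟨Finset.univ_nonempty, ?_⟩
  rw [Finset.coe_univ]
  exact (SimpleGraph.induceUnivIso G).connected_iff.mpr hG

lemma exists_insert_mem_connSets (hG : G.Connected) {I : Finset (Fin n)} (hI : I ∈ connSets G)
    (hIu : I ≠ Finset.univ) : ∃ v ∉ I, insert v I ∈ connSets G := by
  obtain ⟨a, ha⟩ := hI.1
  obtain ⟨b, -, hb⟩ := Finset.exists_of_ssubset (Finset.ssubset_univ_iff.mpr hIu)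
  obtain ⟨d, -, hd, hd'⟩ :=
    (hG.preconnected a b).some.exists_boundary_dart (I : Set (Fin n)) ha hb
  refine ⟨d.snd, hd', Finset.insert_nonempty _ _, ?_⟩
  rw [Finset.coe_insert, ← Set.singleton_union]
  exact SimpleGraph.connected_induce_union SimpleGraph.Preconnected.of_subsingleton
    hI.2.preconnected (Set.mem_singleton _) hd d.adj.symm

end ConnectedSets

section Realization

variable {K : Type*} [Field K] {n : ℕ} {G : SimpleGraph (Fin n)}
  {g : Finset (Fin n) → Module.Dual K (Fin n → K)}

lemma SpanEquivalentOn.mem_span_singletons_iff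
    (hg : SpanEquivalentOn K (connSets G) (sumForm n K) g) {J : Finset (Fin n)}
    (hJ : J ∈ connSets G) (s : Set (Fin n)) :
    g J ∈ span K ((fun i => g {i}) '' s) ↔ ↑J ⊆ s := by
  have hT : (fun i => ({i} : Finset (Fin n))) '' s ⊆ connSets G := by
    rintro _ ⟨i, -, rfl⟩
    exact singleton_mem_connSets i
  have := hg _ hT J hJ
  rw [Set.image_image, Set.image_image] at this
  rw [← this, sumForm_mem_span_singletons_iff]

lemma SpanEquivalentOn.linearIndependent_singletons
    (hg : SpanEquivalentOn K (connSets G) (sumForm n K) g) :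
    LinearIndependent K fun i => g {i} := by
  rw [linearIndependent_iff_notMem_span]
  intro i
  rw [hg.mem_span_singletons_iff (singleton_mem_connSets i)]
  simp

lemma SpanEquivalentOn.mem_span_pair_of_insert
    (hg : SpanEquivalentOn K (connSets G) (sumForm n K) g) {I : Finset (Fin n)} {v : Fin n}
    (hI : I ∈ connSets G) (hv : v ∉ I) (hvI : insert v I ∈ connSets G) :
    g (insert v I) ∈ span K {g I, g {v}} := by
  have hT : {I, {v}} ⊆ connSets G := Set.insert_subset hI (Set.singleton_subset_iff.mpr
    (singleton_mem_connSets v))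
  have := hg _ hT (insert v I) hvI
  rw [Set.image_pair, Set.image_pair] at this
  rw [← this, sumForm_insert hv]
  exact add_mem (subset_span (Set.mem_insert _ _)) (subset_span (Set.mem_insert_of_mem _ rfl))

section Basis

variable (hg : SpanEquivalentOn K (connSets G) (sumForm n K) g)
  {b : Module.Basis (Fin n) K (Module.Dual K (Fin n → K))} (hb : ∀ i, b i = g {i})
include hg hb

lemma SpanEquivalentOn.support_repr {J : Finset (Fin n)} (hJ : J ∈ connSets G) :
    (b.repr (g J)).support = J := by
  have key : ∀ s : Set (Fin n), ↑(b.repr (g J)).support ⊆ s ↔ ↑J ⊆ s := fun s => by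
    rw [← Module.Basis.mem_span_image, ← hg.mem_span_singletons_iff hJ]
    simp only [← hb]
  exact Finset.coe_injective (((key _).mpr subset_rfl).antisymm ((key _).mp subset_rfl))

lemma SpanEquivalentOn.exists_repr_eq_mul_repr_univ (hG : G.Connected) {I : Finset (Fin n)}
    (hI : I ∈ connSets G) :
    ∃ c : K, c ≠ 0 ∧ ∀ i ∈ I, b.repr (g I) i = c * b.repr (g Finset.univ) i := by
  refine Finset.strongDownwardInductionOn (n := Fintype.card (Fin n))
    (p := fun I => I ∈ connSets G →
      ∃ c : K, c ≠ 0 ∧ ∀ i ∈ I, b.repr (g I) i = c * b.repr (g Finset.univ) i)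
    I (fun I ih _ hI => ?_) I.card_le_univ hI
  by_cases hIu : I = Finset.univ
  · exact ⟨1, one_ne_zero, fun i _ => by rw [hIu, one_mul]⟩
  obtain ⟨v, hv, hvI⟩ := exists_insert_mem_connSets hG hI hIu
  obtain ⟨c, hc, hcoef⟩ := ih (Finset.card_le_univ _) (Finset.ssubset_insert hv) hvI
  obtain ⟨s, t, hst⟩ := mem_span_pair.mp (hg.mem_span_pair_of_insert hI hv hvI)
  have hrepr : ∀ i ∈ I, b.repr (g (insert v I)) i = s * b.repr (g I) i := fun i hi => by
    rw [← hst, ← hb, map_add, map_smul, map_smul, b.repr_self]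
    simp [ne_of_mem_of_not_mem hi hv |>.symm]
  obtain ⟨i₀, hi₀⟩ := hI.1
  have hs : s ≠ 0 := by
    rintro rfl
    have hne := (Finsupp.mem_support_iff.mp <|
      (hg.support_repr hb hvI).symm ▸ Finset.mem_insert_of_mem hi₀)
    exact hne (by rw [hrepr i₀ hi₀, zero_mul])
  refine ⟨s⁻¹ * c, mul_ne_zero (inv_ne_zero hs) hc, fun i hi => ?_⟩
  rw [mul_assoc, ← hcoef i (Finset.mem_insert_of_mem hi), hrepr i hi, inv_mul_cancel_left₀ hs]

lemma SpanEquivalentOn.exists_eq_smul_sum (hG : G.Connected) {I : Finset (Fin n)}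
    (hI : I ∈ connSets G) :
    ∃ c : K, c ≠ 0 ∧ g I = c • ∑ i ∈ I, b.repr (g Finset.univ) i • b i := by
  obtain ⟨c, hc, hcoef⟩ := hg.exists_repr_eq_mul_repr_univ hb hG hI
  refine ⟨c, hc, ?_⟩
  conv_lhs => rw [← b.linearCombination_repr (g I)]
  rw [Finsupp.linearCombination_apply, Finsupp.sum, hg.support_repr hb hI, Finset.smul_sum]
  exact Finset.sum_congr rfl fun i hi => by rw [hcoef i hi, smul_smul]

end Basis

theorem SpanEquivalentOn.exists_linearEquiv_map_ker (hG : G.Connected)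
    (hg : SpanEquivalentOn K (connSets G) (sumForm n K) g) :
    ∃ φ : (Fin n → K) ≃ₗ[K] (Fin n → K), ∀ I ∈ connSets G,
      Submodule.map φ.toLinearMap (LinearMap.ker (g I)) = hypI n K I := by
  let b := basisOfLinearIndependentOfCardEqFinrank' _ hg.linearIndependent_singletons (by simp)
  have hb : ∀ i, b i = g {i} := fun i => by simp [b]
  set a := b.repr (g Finset.univ)
  have ha : ∀ i, a i ≠ 0 := fun i => Finsupp.mem_support_iff.mp <| by
    rw [hg.support_repr hb (univ_mem_connSets hG)]
    exact Finset.mem_univ i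
  let ψ : (Fin n → K) →ₗ[K] (Fin n → K) := LinearMap.pi fun i => a i • b i
  have hψ : Function.Injective ψ := by
    refine (injective_iff_map_eq_zero ψ).mpr fun x hx =>
      (Module.forall_dual_apply_eq_zero_iff K x).mp fun f => ?_
    have hbx : ∀ i, b i x = 0 := fun i =>
      (mul_eq_zero.mp (congr_fun hx i)).resolve_left (ha i)
    exact LinearMap.congr_fun (b.ext (f₂ := 0) hbx : Module.Dual.eval K _ x = 0) f
  set φ := LinearEquiv.ofInjectiveEndo ψ hψ
  refine ⟨φ, fun I hI => ?_⟩
  obtain ⟨c, hc, hgI⟩ := hg.exists_eq_smul_sum hb hG hI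
  have hcomp : sumForm n K I ∘ₗ φ.toLinearMap = ∑ i ∈ I, a i • b i :=
    LinearMap.ext fun x => by simp [sumForm_apply, φ, ψ]
  rw [hgI, ← hcomp, LinearMap.ker_smul _ _ hc, LinearMap.ker_comp,
    Submodule.map_comap_eq_of_surjective φ.surjective]
  rfl

end Realization

/-- For a connected simple graph `G` on `[n]`, the connected
subgraph arrangement `A_G` over `ℚ` is projectively unique: every central
arrangement in `ℚ^n` whose intersection lattice is isomorphic as a poset to that
of `A_G` is linearly isomorphic to `A_G`. -/
theorem connArr_projUnique (n : ℕ) (G : SimpleGraph (Fin n)) (hG : G.Connected) :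
    ProjUnique (connArr ℚ G) := by
  rintro B ⟨-, hB⟩ ⟨Ψ⟩
  have hA : ∀ H ∈ connArr ℚ G, IsCoatom H := by
    rintro _ ⟨I, hI, rfl⟩
    exact isCoatom_hypI hI.1
  have hmem : ∀ I ∈ connSets G, latMap Ψ.symm (hypI n ℚ I) ∈ B := fun I hI =>
    latMap_mem_of_isCoatom Ψ.symm hA (fun h => (hB ⊤ h).1 rfl) ⟨I, hI, rfl⟩
  choose! g hg using fun I hI => exists_ker_eq_of_isCoatom (hB _ (hmem I hI))
  obtain ⟨φ, hφ⟩ := (spanEquivalentOn_of_latMap Ψ.symm (fun I hI => ⟨I, hI, rfl⟩)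
    hg).exists_linearEquiv_map_ker hG
  refine ⟨φ, ?_⟩
  calc connArr ℚ G = (fun I => map φ.toLinearMap (latMap Ψ.symm (hypI n ℚ I))) '' connSets G :=
        (Set.image_congr fun I hI => by rw [← hg I hI, hφ I hI]).symm
    _ = map φ.toLinearMap '' (latMap Ψ.symm '' connArr ℚ G) := by
      rw [Set.image_image]
      exact (Set.image_image (fun H => map φ.toLinearMap (latMap Ψ.symm H)) _ _).symm
    _ = map φ.toLinearMap '' B := by rw [image_latMap_eq Ψ.symm hA hB]
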